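/- Let D be a digraph of order p ≥ 3 containing a path P = x₁x₂⋯x_m with 2 ≤ m ≤ p−1, and let x be a vertex not on P. If d(x, V(P)) ≥ m+1 and either the arc x x₁ is absent or the arc x_m x is absent, then there exists an index i with 1 ≤ i ≤ m−1 such that x_i x and x x_{i+1} are both arcs of D. -/
import Mathlib


variable {V : Type*}

/-- Out-degree of `u` in the digraph with arc relation `A`. -/
noncomputable def outDeg (A : V → V → Prop) (u : V) : ℕ := Nat.card {v | A u v}

/-- In-degree of `u`. -/
noncomputable def inDeg (A : V → V → Prop) (u : V) : ℕ := Nat.card {v | A v u}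

/-- Degree of `u`: out-degree plus in-degree. -/
noncomputable def deg (A : V → V → Prop) (u : V) : ℕ := outDeg A u + inDeg A u

/-- Number of arcs between `u` and the set `S`, counting both directions. -/
noncomputable def degOn (A : V → V → Prop) (u : V) (S : Set V) : ℕ :=
  Nat.card {v | v ∈ S ∧ A u v} + Nat.card {v | v ∈ S ∧ A v u}

/-- `x : Fin m → V` is a directed path (distinct vertices, consecutive arcs). -/
def IsPath (A : V → V → Prop) {m : ℕ} (x : Fin m → V) : Prop :=
  Function.Injective x ∧ ∀ (i : ℕ) (h : i + 1 < m), A (x ⟨i, by omega⟩) (x ⟨i + 1, h⟩)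

/-- `x : Fin m → V` is a directed cycle (distinct vertices, cyclically consecutive arcs). -/
def IsCycle (A : V → V → Prop) {m : ℕ} (x : Fin m → V) : Prop :=
  Function.Injective x ∧
    ∀ (i : ℕ) (h : i < m), A (x ⟨i, h⟩) (x ⟨(i + 1) % m, Nat.mod_lt _ (by omega)⟩)

/-- Strong connectivity: every vertex reaches every other by a directed path. -/
def Strong (A : V → V → Prop) : Prop := ∀ x y : V, Relation.ReflTransGen A x y

/-- 2-strong connectivity: order at least 3 and deleting any vertex leaves a strong digraph. -/
def TwoStrong (A : V → V → Prop) : Prop :=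
  3 ≤ Nat.card V ∧ ∀ w : V, Strong (fun a b : {v : V // v ≠ w} => A a.1 b.1)

/-- The digraph is Hamiltonian: it has a directed cycle through all vertices. -/
def Hamiltonian (A : V → V → Prop) : Prop :=
  ∃ c : Fin (Nat.card V) → V, Function.Bijective c ∧ IsCycle A c

/-- The digraph has a Hamiltonian bypass: a Hamiltonian directed path whose
initial vertex dominates its terminal vertex. -/
def HasHamBypass (A : V → V → Prop) : Prop :=
  ∃ f : Fin (Nat.card V) → V, Function.Bijective f ∧
    (∀ (i : ℕ) (h : i + 1 < Nat.card V), A (f ⟨i, by omega⟩) (f ⟨i + 1, h⟩)) ∧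
    ∃ h0 : 0 < Nat.card V, A (f ⟨0, h0⟩) (f ⟨Nat.card V - 1, by omega⟩)

/-- insertion lemma, case d(x,V(P)) ≥ m+1 with a missing end arc. -/
theorem stmt1 {V : Type*} (A : V → V → Prop) (hloop : ∀ v, ¬ A v v)
    (p : ℕ) (hp : 3 ≤ p) (hcard : Nat.card V = p)
    (m : ℕ) (hm2 : 2 ≤ m) (hmp : m ≤ p - 1)
    (x : Fin m → V) (hpath : IsPath A x)
    (v : V) (hv : v ∉ Set.range x)
    (hdeg : m + 1 ≤ degOn A v (Set.range x))
    (hend : ¬ A v (x ⟨0, by omega⟩) ∨ ¬ A (x ⟨m - 1, by omega⟩) v) :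
    ∃ (i : ℕ) (h : i + 1 < m), A (x ⟨i, by omega⟩) v ∧ A v (x ⟨i + 1, h⟩) := by
  classical
  by_contra hno
  push_neg at hno
  have hinj := hpath.1
  have hcount : ∀ (P : V → Prop), Nat.card {w | w ∈ Set.range x ∧ P w}
      = ∑ i : Fin m, if P (x i) then 1 else 0 := by
    intro P
    have hset : {w | w ∈ Set.range x ∧ P w} = x '' {i | P (x i)} := by
      ext w
      simp only [Set.mem_setOf_eq, Set.mem_image, Set.mem_range]
      constructor
      · rintro ⟨⟨i, rfl⟩, hP⟩; exact ⟨i, hP, rfl⟩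
      · rintro ⟨i, hP, rfl⟩; exact ⟨⟨i, rfl⟩, hP⟩
    rw [hset, Nat.card_coe_set_eq, Set.ncard_image_of_injective _ hinj,
      Set.ncard_eq_toFinset_card', Set.toFinset_setOf, Finset.card_filter]
  -- ℕ-indexed indicator functions
  set fA : ℕ → ℕ := fun i => if h : i < m then (if A v (x ⟨i, h⟩) then 1 else 0) else 0 with hfA
  set fB : ℕ → ℕ := fun i => if h : i < m then (if A (x ⟨i, h⟩) v then 1 else 0) else 0 with hfB
  have hAeq : (∑ i : Fin m, if A v (x i) then 1 else 0) = ∑ i ∈ Finset.range m, fA i := by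
    rw [← Fin.sum_univ_eq_sum_range]
    refine Finset.sum_congr rfl fun i _ => ?_
    simp [hfA, i.isLt]
  have hBeq : (∑ i : Fin m, if A (x i) v then 1 else 0) = ∑ i ∈ Finset.range m, fB i := by
    rw [← Fin.sum_univ_eq_sum_range]
    refine Finset.sum_congr rfl fun i _ => ?_
    simp [hfB, i.isLt]
  have hdegOn : degOn A v (Set.range x) = ∑ i ∈ Finset.range m, fA i + ∑ i ∈ Finset.range m, fB i := by
    rw [degOn, hcount (fun w => A v w), hcount (fun w => A w v), hAeq, hBeq]
  -- split sums
  obtain ⟨k, rfl⟩ : ∃ k, m = k + 1 := ⟨m - 1, by omega⟩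
  have hsA : ∑ i ∈ Finset.range (k+1), fA i = (∑ i ∈ Finset.range k, fA (i+1)) + fA 0 :=
    Finset.sum_range_succ' fA k
  have hsB : ∑ i ∈ Finset.range (k+1), fB i = (∑ i ∈ Finset.range k, fB i) + fB k :=
    Finset.sum_range_succ fB k
  have hpair : ∀ i ∈ Finset.range k, fB i + fA (i+1) ≤ 1 := by
    intro i hi
    rw [Finset.mem_range] at hi
    have h1 : i < k + 1 := by omega
    have h2 : i + 1 < k + 1 := by omega
    have := hno i h2
    simp only [hfA, hfB, dif_pos h1, dif_pos h2]
    by_cases hB : A (x ⟨i, h1⟩) v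
    · have : ¬ A v (x ⟨i+1, h2⟩) := this hB
      simp [hB, this]
    · simp only [if_neg hB]
      split <;> omega
  have hsum : ∑ i ∈ Finset.range k, (fB i + fA (i+1)) ≤ k := by
    calc ∑ i ∈ Finset.range k, (fB i + fA (i+1)) ≤ ∑ i ∈ Finset.range k, 1 :=
          Finset.sum_le_sum hpair
      _ = k := by simp
  have hendle : fA 0 + fB k ≤ 1 := by
    have h0 : (0:ℕ) < k + 1 := by omega
    have hk : k < k + 1 := by omega
    simp only [hfA, hfB, dif_pos h0, dif_pos hk]
    rcases hend with h | h
    · rw [if_neg h]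
      split <;> omega
    · have hkk : (⟨k + 1 - 1, by omega⟩ : Fin (k + 1)) = ⟨k, hk⟩ := by
        ext; simp
      rw [hkk] at h
      rw [if_neg h]
      split <;> omega
  have hsplit : ∑ i ∈ Finset.range k, (fB i + fA (i+1))
      = (∑ i ∈ Finset.range k, fB i) + ∑ i ∈ Finset.range k, fA (i+1) :=
    Finset.sum_add_distrib
  rw [hdegOn, hsA, hsB] at hdeg
  omega
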